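/- In the setting of the mean-field Ising model with the equi-energy Metropolis chain, the projected birth-and-death chain \bar P on {0,2,...,N} (with \bar P(0,2) = p₁/2, \bar P(i,i+2) = (p₁/4)(N−i)/N, \bar P(i,i−2) = (p₁/4)((N+i)/N)exp(2β(1−i)/N)) satisfies λ₁(\bar P) ≤ 1 − (p₁/16)·(N/2+1)^{−3} and λ_{N/2}(\bar P) ≥ 1 − p₁, for all β > 0 and N sufficiently large. -/

import Mathlib

open Finset

/-- Upward transition probability of the projected chain at state `k`
(state `k` encodes energy level `i = 2k`): `\bar P(0,2) = p₁/2`,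
`\bar P(i,i+2) = (p₁/4)(N-i)/N`. -/
noncomputable def barUp (N : ℕ) (p₁ : ℝ) (k : ℕ) : ℝ :=
  if k = 0 then p₁ / 2 else p₁ / 4 * (((N : ℝ) - 2 * k) / N)

/-- Downward transition probability: `\bar P(i,i-2) = (p₁/4)((N+i)/N) exp(2β(1-i)/N)`. -/
noncomputable def barDown (N : ℕ) (β p₁ : ℝ) (k : ℕ) : ℝ :=
  p₁ / 4 * (((N : ℝ) + 2 * k) / N) * Real.exp (2 * β * (1 - 2 * (k : ℝ)) / N)

/-- The projected birth-and-death chain `\bar P` on `{0,1,…,N/2}`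
(state `k` encodes level `2k`), with the diagonal making rows sum to one. -/
noncomputable def barQ (N : ℕ) (β p₁ : ℝ) (k j : ℕ) : ℝ :=
  if j = k + 1 ∧ j ≤ N / 2 then barUp N p₁ k
  else if j + 1 = k ∧ k ≤ N / 2 then barDown N β p₁ k
  else if j = k ∧ k ≤ N / 2 then
    1 - (if k + 1 ≤ N / 2 then barUp N p₁ k else 0)
      - (if k ≠ 0 then barDown N β p₁ k else 0)
  else 0

/-- `\bar π(i) ∝ q_N(i)(2 - 1{i=0})` with `q_N(i) = C(N,(N-i)/2) exp(βi²/(2N))`;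
here expressed at state `k` (level `2k`). -/
noncomputable def barPiW (N : ℕ) (β : ℝ) (k : ℕ) : ℝ :=
  (if k = 0 then (1 : ℝ) else 2) *
    (N.choose ((N - 2 * k) / 2) : ℝ) * Real.exp (β * (2 * (k : ℝ)) ^ 2 / (2 * N))

/-!
Write `N = 2n`. `barQ` is the birth–death chain on `{0, …, n}` with up rates `barUp` and
down rates `barDown`, reversible for the weights `π = barPiW`. For an eigenpair `(ev, f)`,
summation by parts gives `(1 - ev) Σ π f = 0` and `(1 - ev) Σ π f² = Σ_j π_j u_j (f_{j+1} - f_j)²`.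
Writing `f_k - f_l` as a sum of increments and applying Cauchy–Schwarz bounds
`Σ_{k,l} π_k π_l (f_k - f_l)²` by `2n Σ_j π[0,j] π(j,n] (f_{j+1} - f_j)²`; since `π` is unimodal,
`π[0,j] π(j,n] ≤ (n+1) π_j Σ π`, and `u_j ≥ p₁/(4n)` then gives `1 - ev ≥ p₁/(4n²(n+1))`.
Unimodality: `log (π_{k+1}/π_k)` is concave in `k` and, for large `n`, either starts nonnegative
(`β ≥ 1`) or decreases from the start, so it changes sign at most once.
The lower bound `1 - p₁` is Gershgorin's: each row has off-diagonal mass at most `p₁/2`.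
-/

theorem sum_sum_mul_sq_sub {ι : Type*} (s : Finset ι) (w f : ι → ℝ) :
    ∑ k ∈ s, ∑ l ∈ s, w k * w l * (f k - f l) ^ 2 =
      2 * ((∑ k ∈ s, w k) * ∑ k ∈ s, w k * f k ^ 2) - 2 * (∑ k ∈ s, w k * f k) ^ 2 := by
  have h : ∀ k l, w k * w l * (f k - f l) ^ 2 =
      w k * f k ^ 2 * w l + w k * (w l * f l ^ 2) - 2 * (w k * f k * (w l * f l)) :=
    fun k l => by ring
  simp_rw [h, sum_sub_distrib, sum_add_distrib, ← mul_sum, ← sum_mul]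
  ring

theorem sum_sum_mul_sq_sub_pos {ι : Type*} {s : Finset ι} {w f : ι → ℝ}
    (hw : ∀ k ∈ s, 0 < w k) (hf : ∃ k ∈ s, ∃ l ∈ s, f k ≠ f l) :
    0 < ∑ k ∈ s, ∑ l ∈ s, w k * w l * (f k - f l) ^ 2 := by
  obtain ⟨k, hk, l, hl, hne⟩ := hf
  have hterm : ∀ k ∈ s, ∀ l ∈ s, 0 ≤ w k * w l * (f k - f l) ^ 2 :=
    fun k hk l hl => by have := hw k hk; have := hw l hl; positivity
  refine sum_pos' (fun k hk => sum_nonneg (hterm k hk))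
    ⟨k, hk, sum_pos' (hterm k hk) ⟨l, hl, ?_⟩⟩
  have := hw k hk; have := hw l hl; have := sub_ne_zero.mpr hne
  positivity

theorem sq_sub_le_mul_sum_Ico (f : ℕ → ℝ) {k l : ℕ} (hkl : k ≤ l) :
    (f l - f k) ^ 2 ≤ (l - k : ℕ) * ∑ j ∈ Ico k l, (f (j + 1) - f j) ^ 2 := by
  have h := sq_sum_le_card_mul_sum_sq (s := Ico k l) (f := fun j => f (j + 1) - f j)
  rwa [sum_Ico_sub f hkl, Nat.card_Ico] at h

theorem antitoneOn_Icc_of_concave_of_lt {s : ℕ → ℝ} {M i j : ℕ}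
    (hconc : AntitoneOn (fun x => s (x + 1) - s x) (Set.Iio M)) (hij : i ≤ j) (hlt : s j < s i) :
    AntitoneOn s (Set.Icc j M) := by
  have hsum : ∑ x ∈ Ico i j, (s (x + 1) - s x) < ∑ x ∈ Ico i j, (0 : ℝ) := by
    rw [sum_Ico_sub s hij, sum_const_zero]; linarith
  obtain ⟨x, hx, hdesc⟩ := exists_lt_of_sum_lt hsum
  rw [mem_Ico] at hx
  refine antitoneOn_of_succ_le Set.ordConnected_Icc fun a _ ha hsa => ?_
  simp only [Set.mem_Icc, Order.succ_eq_add_one] at ha hsa ⊢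
  have h := hconc (show x ∈ Set.Iio M from Set.mem_Iio.mpr (by omega))
    (show a ∈ Set.Iio M from Set.mem_Iio.mpr (by omega)) (by omega)
  simp only at h
  linarith

/-- At `k = 0` the down term vanishes whatever `d 0` is, since `0 - 1 = 0` in `ℕ`. -/
noncomputable def birthDeathGen (u d f : ℕ → ℝ) (k : ℕ) : ℝ :=
  u k * (f (k + 1) - f k) + d k * (f (k - 1) - f k)

section BirthDeath

variable {n : ℕ} {π u d : ℕ → ℝ}

theorem sum_mul_birthDeathGen (hun : u n = 0)
    (hrev : ∀ j < n, π (j + 1) * d (j + 1) = π j * u j) (f g : ℕ → ℝ) :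
    ∑ k ∈ range (n + 1), π k * g k * birthDeathGen u d f k =
      -∑ j ∈ range n, π j * u j * (g (j + 1) - g j) * (f (j + 1) - f j) := by
  have hup : ∑ k ∈ range (n + 1), π k * g k * (u k * (f (k + 1) - f k)) =
      ∑ j ∈ range n, π j * u j * g j * (f (j + 1) - f j) := by
    rw [sum_range_succ, hun]
    simp only [zero_mul, mul_zero, add_zero]
    exact sum_congr rfl fun j _ => by ring
  have hdown : ∑ k ∈ range (n + 1), π k * g k * (d k * (f (k - 1) - f k)) =
      -∑ j ∈ range n, π j * u j * g (j + 1) * (f (j + 1) - f j) := by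
    rw [sum_range_succ', ← sum_neg_distrib]
    simp only [Nat.zero_sub, sub_self, mul_zero, add_zero, Nat.add_sub_cancel]
    refine sum_congr rfl fun j hj => ?_
    rw [← hrev j (mem_range.mp hj)]
    ring
  simp only [birthDeathGen, mul_add]
  rw [sum_add_distrib, hup, hdown, ← sub_eq_add_neg, ← sum_sub_distrib, ← sum_neg_distrib]
  exact sum_congr rfl fun j _ => by ring

theorem sum_mul_mul_birthDeathGen_eq {f : ℕ → ℝ} {ev : ℝ}
    (hf : ∀ k ≤ n, birthDeathGen u d f k = (ev - 1) * f k) (g : ℕ → ℝ) :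
    ∑ k ∈ range (n + 1), π k * g k * birthDeathGen u d f k =
      (ev - 1) * ∑ k ∈ range (n + 1), π k * g k * f k := by
  rw [mul_sum]
  exact sum_congr rfl fun k hk => by rw [hf k (mem_range_succ_iff.mp hk)]; ring

theorem sub_one_mul_sum_mul_eq_zero {f : ℕ → ℝ} {ev : ℝ} (hun : u n = 0)
    (hrev : ∀ j < n, π (j + 1) * d (j + 1) = π j * u j)
    (hf : ∀ k ≤ n, birthDeathGen u d f k = (ev - 1) * f k) :
    (ev - 1) * ∑ k ∈ range (n + 1), π k * f k = 0 := by
  have h := sum_mul_birthDeathGen hun hrev f fun _ => 1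
  rw [sum_mul_mul_birthDeathGen_eq hf] at h
  simpa using h

theorem one_sub_mul_sum_mul_sq_eq {f : ℕ → ℝ} {ev : ℝ} (hun : u n = 0)
    (hrev : ∀ j < n, π (j + 1) * d (j + 1) = π j * u j)
    (hf : ∀ k ≤ n, birthDeathGen u d f k = (ev - 1) * f k) :
    (1 - ev) * ∑ k ∈ range (n + 1), π k * f k ^ 2 =
      ∑ j ∈ range n, π j * u j * (f (j + 1) - f j) ^ 2 := by
  have h := sum_mul_birthDeathGen hun hrev f f
  rw [sum_mul_mul_birthDeathGen_eq hf] at h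
  simp only [mul_assoc, ← sq] at h ⊢
  linear_combination -h

theorem abs_sub_one_le_of_birthDeathGen_eq {f : ℕ → ℝ} {ev r : ℝ}
    (hu : ∀ k ≤ n, 0 ≤ u k) (hd : ∀ k ≤ n, 0 ≤ d k) (hun : u n = 0) (hr : ∀ k ≤ n, u k + d k ≤ r)
    (hf : ∀ k ≤ n, birthDeathGen u d f k = (ev - 1) * f k) (hnz : ∃ k ≤ n, f k ≠ 0) :
    |ev - 1| ≤ 2 * r := by
  obtain ⟨K, hK, hmax⟩ :=
    exists_max_image (range (n + 1)) (fun j => |f j|) nonempty_range_add_one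
  rw [mem_range_succ_iff] at hK
  have hmax' : ∀ j ≤ n, |f j| ≤ |f K| := fun j hj => hmax j (mem_range_succ_iff.mpr hj)
  have hfK : 0 < |f K| := by
    obtain ⟨k, hk, hfk⟩ := hnz
    exact (abs_pos.mpr hfk).trans_le (hmax' k hk)
  have hdiff : ∀ j ≤ n, |f j - f K| ≤ 2 * |f K| := fun j hj =>
    (abs_sub _ _).trans (by linarith [hmax' j hj])
  have hup : u K * |f (K + 1) - f K| ≤ u K * (2 * |f K|) := by
    rcases hK.lt_or_eq with hKn | rfl
    · exact mul_le_mul_of_nonneg_left (hdiff _ hKn) (hu K hK)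
    · simp [hun]
  refine le_of_mul_le_mul_right ?_ hfK
  calc |ev - 1| * |f K| = |birthDeathGen u d f K| := by rw [hf K hK, abs_mul]
    _ ≤ u K * |f (K + 1) - f K| + d K * |f (K - 1) - f K| := by
      refine (abs_add_le _ _).trans_eq ?_
      rw [abs_mul, abs_mul, abs_of_nonneg (hu K hK), abs_of_nonneg (hd K hK)]
    _ ≤ u K * (2 * |f K|) + d K * (2 * |f K|) :=
      add_le_add hup (mul_le_mul_of_nonneg_left (hdiff _ (by omega)) (hd K hK))
    _ ≤ 2 * r * |f K| := by nlinarith [hr K hK]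

theorem sq_sub_le_mul_sum_crossing (f : ℕ → ℝ) {k l : ℕ} (hk : k ≤ n) (hl : l ≤ n) :
    (f k - f l) ^ 2 ≤ n * ∑ j ∈ range n,
      ((if k ≤ j ∧ j < l then 1 else 0) + (if l ≤ j ∧ j < k then 1 else 0)) *
        (f (j + 1) - f j) ^ 2 := by
  wlog hkl : k ≤ l generalizing k l
  · simpa only [add_comm, ← neg_sub (f k), neg_sq] using this hl hk (by omega)
  have hsum : ∑ j ∈ range n,
      ((if k ≤ j ∧ j < l then 1 else 0) + (if l ≤ j ∧ j < k then 1 else 0)) *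
        (f (j + 1) - f j) ^ 2 = ∑ j ∈ Ico k l, (f (j + 1) - f j) ^ 2 := by
    have hfilter : (range n).filter (fun j => k ≤ j ∧ j < l) = Ico k l := by
      ext j; simp only [mem_filter, mem_range, mem_Ico]; omega
    rw [← hfilter, sum_filter]
    refine sum_congr rfl fun j _ => ?_
    split_ifs <;> first | omega | ring
  rw [hsum, ← neg_sub, neg_sq]
  refine (sq_sub_le_mul_sum_Ico f hkl).trans
    (mul_le_mul_of_nonneg_right ?_ (sum_nonneg fun _ _ => sq_nonneg _))
  exact_mod_cast (by omega : l - k ≤ n)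

theorem sum_sum_mul_crossing (j : ℕ) :
    ∑ k ∈ range (n + 1), ∑ l ∈ range (n + 1),
      π k * π l * ((if k ≤ j ∧ j < l then 1 else 0) + (if l ≤ j ∧ j < k then 1 else 0)) =
      2 * ((∑ k ∈ range (n + 1) with k ≤ j, π k) * ∑ l ∈ range (n + 1) with j < l, π l) := by
  have h : ∀ k l,
      π k * π l * ((if k ≤ j ∧ j < l then 1 else 0) + (if l ≤ j ∧ j < k then 1 else 0)) =
      (if k ≤ j then π k else 0) * (if j < l then π l else 0) +
        (if j < k then π k else 0) * (if l ≤ j then π l else 0) := fun k l => by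
    split_ifs <;> first | omega | ring
  simp_rw [h, sum_add_distrib, ← sum_mul_sum, sum_filter]
  ring

theorem sum_le_mul_sum_lt_le {m j : ℕ} (hπ : ∀ k ≤ n, 0 ≤ π k)
    (hmono : MonotoneOn π (Set.Iic m)) (hanti : AntitoneOn π (Set.Icc m n)) (hj : j ≤ n) :
    (∑ k ∈ range (n + 1) with k ≤ j, π k) * (∑ l ∈ range (n + 1) with j < l, π l) ≤
      (n + 1) * π j * ∑ k ∈ range (n + 1), π k := by
  have hπ' : ∀ k ∈ range (n + 1), 0 ≤ π k := fun k hk => hπ k (mem_range_succ_iff.mp hk)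
  have hle_sum : ∀ p : ℕ → Prop, [DecidablePred p] →
      ∑ k ∈ range (n + 1) with p k, π k ≤ ∑ k ∈ range (n + 1), π k :=
    fun p _ => sum_le_sum_of_subset_of_nonneg (filter_subset _ _) fun k hk _ => hπ' k hk
  have hle_card : ∀ p : ℕ → Prop, [DecidablePred p] →
      (∀ k ∈ range (n + 1), p k → π k ≤ π j) →
        ∑ k ∈ range (n + 1) with p k, π k ≤ (n + 1) * π j := by
    intro p _ hp
    refine (sum_le_card_nsmul _ _ (π j) fun k hk => ?_).trans ?_
    · rw [mem_filter] at hk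
      exact hp k hk.1 hk.2
    · rw [nsmul_eq_mul]
      refine mul_le_mul_of_nonneg_right ?_ (hπ j hj)
      exact_mod_cast (card_filter_le _ _).trans (card_range _).le
  have hnonneg : ∀ p : ℕ → Prop, [DecidablePred p] →
      0 ≤ ∑ k ∈ range (n + 1) with p k, π k :=
    fun p _ => sum_nonneg fun k hk => hπ' k (mem_filter.mp hk).1
  have hπj : 0 ≤ (n + 1 : ℝ) * π j := mul_nonneg (by positivity) (hπ j hj)
  rcases lt_or_ge j m with hjm | hmj
  · have hL := hle_card (· ≤ j) fun k _ hkj => hmono (Set.mem_Iic.mpr (by omega))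
      (Set.mem_Iic.mpr hjm.le) hkj
    exact (mul_le_mul hL (hle_sum _) (hnonneg _) hπj).trans_eq (by ring)
  · have hR := hle_card (j < ·) fun k hk hjk => hanti ⟨hmj, hj⟩
      ⟨by omega, mem_range_succ_iff.mp hk⟩ hjk.le
    exact (mul_le_mul (hle_sum _) hR (hnonneg _) (sum_nonneg hπ')).trans_eq (by ring)

theorem sum_sum_mul_sq_sub_le (hπ : ∀ k ≤ n, 0 ≤ π k) (f : ℕ → ℝ) :
    ∑ k ∈ range (n + 1), ∑ l ∈ range (n + 1), π k * π l * (f k - f l) ^ 2 ≤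
      2 * n * ∑ j ∈ range n, (∑ k ∈ range (n + 1) with k ≤ j, π k) *
        (∑ l ∈ range (n + 1) with j < l, π l) * (f (j + 1) - f j) ^ 2 := by
  set I : ℕ → ℕ → ℕ → ℝ := fun k l j =>
    (if k ≤ j ∧ j < l then 1 else 0) + (if l ≤ j ∧ j < k then 1 else 0)
  calc _ ≤ ∑ k ∈ range (n + 1), ∑ l ∈ range (n + 1),
        π k * π l * (n * ∑ j ∈ range n, I k l j * (f (j + 1) - f j) ^ 2) := by
        refine sum_le_sum fun k hk => sum_le_sum fun l hl => mul_le_mul_of_nonneg_left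
          (sq_sub_le_mul_sum_crossing f (mem_range_succ_iff.mp hk) (mem_range_succ_iff.mp hl))
          (mul_nonneg (hπ k (mem_range_succ_iff.mp hk)) (hπ l (mem_range_succ_iff.mp hl)))
    _ = n * ∑ j ∈ range n,
        (∑ k ∈ range (n + 1), ∑ l ∈ range (n + 1), π k * π l * I k l j) *
          (f (j + 1) - f j) ^ 2 := by
        simp_rw [mul_sum, sum_mul]
        rw [sum_congr rfl fun k _ => sum_comm, sum_comm]
        simp only [mul_sum]
        exact sum_congr rfl fun j _ => sum_congr rfl fun k _ => sum_congr rfl fun l _ => by ring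
    _ = _ := by
        simp only [I, sum_sum_mul_crossing]
        rw [mul_sum, mul_sum]
        exact sum_congr rfl fun j _ => by ring

theorem sum_sum_mul_sq_sub_le_of_unimodal {m : ℕ} {δ : ℝ} (hπ : ∀ k ≤ n, 0 ≤ π k)
    (hmono : MonotoneOn π (Set.Iic m)) (hanti : AntitoneOn π (Set.Icc m n)) (hδ : 0 < δ)
    (hu : ∀ j < n, δ ≤ u j) (f : ℕ → ℝ) :
    ∑ k ∈ range (n + 1), ∑ l ∈ range (n + 1), π k * π l * (f k - f l) ^ 2 ≤
      2 * n * (n + 1) * (∑ k ∈ range (n + 1), π k) / δ *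
        ∑ j ∈ range n, π j * u j * (f (j + 1) - f j) ^ 2 := by
  set S := ∑ k ∈ range (n + 1), π k
  calc _ ≤ 2 * n * ∑ j ∈ range n, (∑ k ∈ range (n + 1) with k ≤ j, π k) *
        (∑ l ∈ range (n + 1) with j < l, π l) * (f (j + 1) - f j) ^ 2 :=
        sum_sum_mul_sq_sub_le hπ f
    _ ≤ 2 * n * ∑ j ∈ range n, (n + 1) * S / δ * (π j * u j) * (f (j + 1) - f j) ^ 2 := by
        refine mul_le_mul_of_nonneg_left (sum_le_sum fun j hj => ?_) (by positivity)
        refine mul_le_mul_of_nonneg_right ?_ (sq_nonneg _)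
        have hj := mem_range.mp hj
        calc _ ≤ (n + 1) * π j * S := sum_le_mul_sum_lt_le hπ hmono hanti hj.le
          _ ≤ (n + 1) * π j * S * (u j / δ) :=
              le_mul_of_one_le_right (mul_nonneg (mul_nonneg (by positivity) (hπ j hj.le))
                (sum_nonneg fun k hk => hπ k (mem_range_succ_iff.mp hk)))
                ((one_le_div hδ).mpr (hu j hj))
          _ = _ := by ring
    _ = _ := by
        rw [mul_sum (range n), mul_sum (range n)]
        exact sum_congr rfl fun j _ => by ring

theorem div_le_one_sub_of_birthDeathGen_eq {m : ℕ} {f : ℕ → ℝ} {ev δ : ℝ}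
    (hπ : ∀ k ≤ n, 0 < π k) (hmono : MonotoneOn π (Set.Iic m))
    (hanti : AntitoneOn π (Set.Icc m n)) (hun : u n = 0)
    (hrev : ∀ j < n, π (j + 1) * d (j + 1) = π j * u j) (hδ : 0 < δ)
    (hu : ∀ j < n, δ ≤ u j) (hf : ∀ k ≤ n, birthDeathGen u d f k = (ev - 1) * f k)
    (hnc : ∃ k ≤ n, ∃ k' ≤ n, f k ≠ f k') :
    δ / (n * (n + 1)) ≤ 1 - ev := by
  have hπ' : ∀ k ∈ range (n + 1), 0 < π k := fun k hk => hπ k (mem_range_succ_iff.mp hk)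
  have hVpos := sum_sum_mul_sq_sub_pos hπ' (by simpa only [mem_range_succ_iff] using hnc)
  have hVle := sum_sum_mul_sq_sub_le_of_unimodal (fun k hk => (hπ k hk).le) hmono hanti hδ hu f
  rw [sum_sum_mul_sq_sub] at hVle hVpos
  set S := ∑ k ∈ range (n + 1), π k
  set A := ∑ k ∈ range (n + 1), π k * f k
  set B := ∑ k ∈ range (n + 1), π k * f k ^ 2
  set D := ∑ j ∈ range n, π j * u j * (f (j + 1) - f j) ^ 2
  have hA : (ev - 1) * A = 0 := sub_one_mul_sum_mul_eq_zero hun hrev hf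
  have hB : (1 - ev) * B = D := one_sub_mul_sum_mul_sq_eq hun hrev hf
  rw [← hB] at hVle
  have hS : 0 < S := sum_pos hπ' nonempty_range_add_one
  have hB0 : 0 ≤ B := sum_nonneg fun k hk => by have := hπ' k hk; positivity
  -- `hVpos` rules out `ev ≥ 1`; then `A = 0`: `f` is orthogonal to constants.
  have hgap : 0 < 1 - ev := by
    by_contra! h
    have : 2 * n * (n + 1) * S / δ * ((1 - ev) * B) ≤ 0 :=
      mul_nonpos_of_nonneg_of_nonpos (by positivity) (mul_nonpos_of_nonpos_of_nonneg h hB0)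
    linarith
  have hA0 : A = 0 := (mul_eq_zero.mp hA).resolve_left (by linarith)
  rw [hA0] at hVle hVpos
  have hSB : 0 < 2 * (S * B) := by linarith
  have h : 2 * (S * B) ≤ 2 * (S * B) * ((1 - ev) * (n * (n + 1))) / δ := by
    convert hVle using 1 <;> ring
  rw [le_div_iff₀ hδ] at h
  exact div_le_of_le_mul₀ (by positivity) hgap.le (le_of_mul_le_mul_left h hSB)

end BirthDeath

open Real

theorem barPiW_pos (N : ℕ) (β : ℝ) (k : ℕ) : 0 < barPiW N β k := by
  have : (0 : ℝ) < N.choose ((N - 2 * k) / 2) := by exact_mod_cast Nat.choose_pos (by omega)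
  unfold barPiW
  positivity

theorem barPiW_two_mul (n : ℕ) (β : ℝ) (k : ℕ) :
    barPiW (2 * n) β k =
      (if k = 0 then 1 else 2) * ((2 * n).choose (n - k) * exp (β * k ^ 2 / n)) := by
  rw [barPiW, show (2 * n - 2 * k) / 2 = n - k by omega, mul_assoc]
  push_cast
  ring_nf

theorem choose_mul_exp_succ (n : ℕ) (β : ℝ) {k : ℕ} (hk : k < n) :
    ((2 * n).choose (n - (k + 1)) * exp (β * (k + 1 : ℕ) ^ 2 / n)) * (n + k + 1) =
      ((2 * n).choose (n - k) * exp (β * k ^ 2 / n)) * ((n - k) * exp (β * (2 * k + 1) / n)) := by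
  have hchoose := Nat.choose_succ_right_eq (2 * n) (n - (k + 1))
  rw [show n - (k + 1) + 1 = n - k by omega,
    show 2 * n - (n - (k + 1)) = n + k + 1 by omega] at hchoose
  have hchoose' : ((2 * n).choose (n - k) : ℝ) * (n - k : ℕ) =
      (2 * n).choose (n - (k + 1)) * (n + k + 1 : ℕ) := by
    exact_mod_cast hchoose
  rw [Nat.cast_sub hk.le] at hchoose'
  have hexp :
      exp (β * (k + 1 : ℕ) ^ 2 / n) = exp (β * k ^ 2 / n) * exp (β * (2 * k + 1) / n) := by
    rw [← exp_add]; push_cast; ring_nf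
  rw [hexp]
  push_cast at hchoose'
  linear_combination exp (β * k ^ 2 / n) * exp (β * (2 * k + 1) / n) * hchoose'.symm

noncomputable def barDownRate (N : ℕ) (β p₁ : ℝ) (k : ℕ) : ℝ :=
  if k = 0 then 0 else barDown N β p₁ k

theorem barPiW_mul_barDownRate_succ {n : ℕ} (β p₁ : ℝ) {j : ℕ} (hj : j < n) :
    barPiW (2 * n) β (j + 1) * barDownRate (2 * n) β p₁ (j + 1) =
      barPiW (2 * n) β j * barUp (2 * n) p₁ j := by
  rw [barDownRate, if_neg j.succ_ne_zero]
  have hn : (n : ℝ) ≠ 0 := by exact_mod_cast (show n ≠ 0 by omega)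
  have key := choose_mul_exp_succ n β hj
  set t := β * (2 * j + 1) / n
  have hdown : barDown (2 * n) β p₁ (j + 1) = p₁ / 4 * ((n + j + 1) / n) * (exp t)⁻¹ := by
    rw [barDown, ← exp_neg]
    push_cast
    congr 2
    · field_simp; ring
    · simp only [t]; field_simp; ring
  rw [barPiW_two_mul, barPiW_two_mul, hdown, if_neg (by omega)]
  unfold barUp
  rcases Nat.eq_zero_or_pos j with rfl | hj0
  · simp only [if_true]
    field_simp
    linear_combination 4 * p₁ * key
  · simp only [if_neg hj0.ne']
    field_simp
    push_cast at key ⊢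
    linear_combination 2 * n * p₁ * key

/-- `log (π (k + 1) / π k)` for `π = barPiW (2 * n) β` and `1 ≤ k < n`. -/
noncomputable def barLogRatio (β : ℝ) (n k : ℕ) : ℝ :=
  log (n - k) - log (n + k + 1) + β * (2 * k + 1) / n

theorem exp_barLogRatio (β : ℝ) {n k : ℕ} (hk : k < n) :
    exp (barLogRatio β n k) = (n - k) / (n + k + 1) * exp (β * (2 * k + 1) / n) := by
  have hnk : (0 : ℝ) < n - k := sub_pos.mpr (by exact_mod_cast hk)
  rw [barLogRatio, exp_add, exp_sub, exp_log hnk, exp_log (by positivity)]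

theorem barPiW_succ {n : ℕ} (β : ℝ) {k : ℕ} (hk₀ : k ≠ 0) (hk : k < n) :
    barPiW (2 * n) β (k + 1) = barPiW (2 * n) β k * exp (barLogRatio β n k) := by
  have key := choose_mul_exp_succ n β hk
  rw [barPiW_two_mul, barPiW_two_mul, if_neg hk₀, if_neg k.succ_ne_zero, exp_barLogRatio β hk]
  field_simp
  linear_combination key

theorem barPiW_zero_le_one {n : ℕ} {β : ℝ} (hβ : 0 ≤ β) (hn : 0 < n) :
    barPiW (2 * n) β 0 ≤ barPiW (2 * n) β 1 := by
  have key := choose_mul_exp_succ n β hn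
  rw [barPiW_two_mul, barPiW_two_mul, if_pos rfl, if_neg one_ne_zero]
  norm_num at key ⊢
  have hn' : (1 : ℝ) ≤ n := by exact_mod_cast hn
  have ht : 1 ≤ exp (β / n) := one_le_exp (by positivity)
  have hC : (0 : ℝ) ≤ (2 * n).choose n := Nat.cast_nonneg _
  refine le_of_mul_le_mul_right ?_ (by positivity : (0 : ℝ) < n + 1)
  nlinarith [mul_le_mul_of_nonneg_left ht hC]

theorem antitoneOn_barLogRatio_succ_sub (β : ℝ) (n : ℕ) :
    AntitoneOn (fun x => barLogRatio β n (x + 1) - barLogRatio β n x) (Set.Iio (n - 1)) := by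
  refine antitoneOn_of_succ_le Set.ordConnected_Iio fun x _ _ hx => ?_
  rw [Set.mem_Iio, Order.succ_eq_add_one] at hx
  suffices h : barLogRatio β n (x + 2) + barLogRatio β n x ≤
      barLogRatio β n (x + 1) + barLogRatio β n (x + 1) by
    simp only [Order.succ_eq_add_one]; linarith
  rw [← exp_le_exp, exp_add, exp_add, exp_barLogRatio β (by omega),
    exp_barLogRatio β (by omega), exp_barLogRatio β (by omega)]
  push_cast
  have hx' : (x : ℝ) + 3 ≤ n := by exact_mod_cast (show x + 3 ≤ n by omega)
  have hE : exp (β * (2 * (x + 2) + 1) / n) * exp (β * (2 * x + 1) / n) =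
      exp (β * (2 * (x + 1) + 1) / n) ^ 2 := by
    rw [← exp_add, sq, ← exp_add]; ring_nf
  have hratio : (n - (x + 2)) / (n + (x + 2) + 1) * ((n - x) / (n + x + 1)) *
      (exp (β * (2 * (x + 2) + 1) / n) * exp (β * (2 * x + 1) / n)) ≤
      ((n - (x + 1)) / (n + (x + 1) + 1)) ^ 2 *
      (exp (β * (2 * (x + 2) + 1) / n) * exp (β * (2 * x + 1) / n)) := by
    refine mul_le_mul_of_nonneg_right ?_ (by positivity)
    rw [div_mul_div_comm, div_pow, div_le_div_iff₀ (by positivity) (by positivity)]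
    -- with `a = n - x - 1 ≤ b = n + x + 2` this reads `(a² - 1) b² ≤ a² (b² - 1)`
    nlinarith
  linear_combination hratio + ((n - (x + 1)) / (n + (x + 1) + 1) : ℝ) ^ 2 * hE

theorem barLogRatio_zero_nonneg {β : ℝ} (hβ : 1 ≤ β) {n : ℕ} (hn : 0 < n) :
    0 ≤ barLogRatio β n 0 := by
  have hn' : (0 : ℝ) < n := by exact_mod_cast hn
  rw [← one_le_exp_iff, exp_barLogRatio β hn]
  have h := add_one_le_exp (β / n)
  push_cast
  rw [sub_zero, add_zero, mul_zero, zero_add, mul_one]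
  calc (1 : ℝ) = n / (n + 1) * (1 / n + 1) := by field_simp; ring
    _ ≤ n / (n + 1) * exp (β / n) := by gcongr; linarith [div_le_div_of_nonneg_right hβ hn'.le]

theorem barLogRatio_one_lt_zero {β : ℝ} {n : ℕ} (hn : 2 ≤ n) (hβn : β * (n + 2) ≤ n) :
    barLogRatio β n 1 < barLogRatio β n 0 := by
  have hn' : (2 : ℝ) ≤ n := by exact_mod_cast hn
  have h₁ := log_le_sub_one_of_pos (div_pos (by linarith) (by positivity) : 0 < (n - 1 : ℝ) / n)
  have h₂ := log_le_sub_one_of_pos (by positivity : 0 < ((n : ℝ) + 1) / (n + 2))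
  rw [log_div (by linarith) (by positivity)] at h₁
  rw [log_div (by positivity) (by positivity)] at h₂
  have key : ((n : ℝ) - 1) / n - 1 + ((n + 1) / (n + 2) - 1) + 2 * β / n < 0 := by
    rw [div_sub_one (by positivity), div_sub_one (by positivity),
      div_add_div _ _ (by positivity) (by positivity),
      div_add_div _ _ (by positivity) (by positivity), div_neg_iff]
    right
    constructor
    · nlinarith
    · positivity
  unfold barLogRatio
  norm_num
  rw [show (n : ℝ) + 1 + 1 = n + 2 by ring, show β * 3 / n = β / n + 2 * β / n by ring]
  linarith

theorem barPiW_unimodal {n : ℕ} {β : ℝ} (hβ : 0 ≤ β) (hlarge : 1 ≤ β ∨ β * (n + 2) ≤ n) :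
    ∃ m, MonotoneOn (barPiW (2 * n) β) (Set.Iic m) ∧
      AntitoneOn (barPiW (2 * n) β) (Set.Icc m n) := by
  set w := barPiW (2 * n) β
  set s := barLogRatio β n
  have hup : ∀ a, a < n → (a = 0 ∨ 0 ≤ s a) → w a ≤ w (a + 1) := by
    intro a ha hs
    rcases eq_or_ne a 0 with rfl | ha0
    · exact barPiW_zero_le_one hβ ha
    · rw [show w (a + 1) = w a * exp (s a) from barPiW_succ β ha0 ha]
      exact le_mul_of_one_le_right (barPiW_pos _ _ _).le (one_le_exp (hs.resolve_left ha0))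
  have hdown : ∀ a, a ≠ 0 → a < n → s a ≤ 0 → w (a + 1) ≤ w a := fun a ha0 ha hs => by
    rw [show w (a + 1) = w a * exp (s a) from barPiW_succ β ha0 ha]
    exact mul_le_of_le_one_right (barPiW_pos _ _ _).le (exp_le_one_iff.mpr hs)
  by_cases hneg : ∃ k, k ≠ 0 ∧ k < n ∧ s k < 0
  · classical
    set m := Nat.find hneg
    obtain ⟨hm0, hmn, hsm⟩ := Nat.find_spec hneg
    have hconc := antitoneOn_barLogRatio_succ_sub β n
    have hanti : AntitoneOn s (Set.Icc m (n - 1)) := by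
      rcases hlarge with hβ1 | hβn
      · exact antitoneOn_Icc_of_concave_of_lt hconc (Nat.zero_le m)
          (hsm.trans_le (barLogRatio_zero_nonneg hβ1 (by omega)))
      · exact (antitoneOn_Icc_of_concave_of_lt hconc zero_le_one
          (barLogRatio_one_lt_zero (by omega) hβn)).mono
          (Set.Icc_subset_Icc_left (by omega))
    refine ⟨m, monotoneOn_of_le_succ Set.ordConnected_Iic fun a _ _ ha => ?_,
      antitoneOn_of_succ_le Set.ordConnected_Icc fun a _ ha hsa => ?_⟩
    · rw [Set.mem_Iic, Order.succ_eq_add_one] at ha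
      refine hup a (by omega) ((eq_or_ne a 0).imp_right fun ha0 => not_lt.mp fun hs => ?_)
      exact Nat.find_min hneg (by omega : a < m) ⟨ha0, by omega, hs⟩
    · simp only [Set.mem_Icc, Order.succ_eq_add_one] at ha hsa ⊢
      exact hdown a (by omega) (by omega)
        ((hanti ⟨le_rfl, by omega⟩ ⟨ha.1, by omega⟩ ha.1).trans hsm.le)
  · simp only [not_exists, not_and, not_lt] at hneg
    refine ⟨n, monotoneOn_of_le_succ Set.ordConnected_Iic fun a _ _ ha => ?_,
      antitoneOn_of_succ_le Set.ordConnected_Icc fun a _ ha hsa => ?_⟩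
    · rw [Set.mem_Iic, Order.succ_eq_add_one] at ha
      exact hup a (by omega) ((eq_or_ne a 0).imp_right fun ha0 => hneg a ha0 (by omega))
    · simp only [Set.mem_Icc, Order.succ_eq_add_one] at ha hsa
      omega

theorem barUp_self {n : ℕ} (hn : 0 < n) (p₁ : ℝ) : barUp (2 * n) p₁ n = 0 := by
  rw [barUp, if_neg hn.ne']
  push_cast
  simp

theorem sum_barQ_mul {n : ℕ} (hn : 0 < n) (β p₁ : ℝ) {k : ℕ} (hk : k ≤ n)
    (f : ℕ → ℝ) :
    ∑ j ∈ range (n + 1), barQ (2 * n) β p₁ k j * f j =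
      f k + birthDeathGen (barUp (2 * n) p₁) (barDownRate (2 * n) β p₁) f k := by
  have hup : ¬ k + 1 ≤ n → barUp (2 * n) p₁ k = 0 := fun h => by
    rw [show k = n by omega, barUp_self hn]
  have hterm : ∀ j ∈ range (n + 1), barQ (2 * n) β p₁ k j * f j =
      (if j = k + 1 then barUp (2 * n) p₁ k * f j else 0) +
      (if j = k - 1 then barDownRate (2 * n) β p₁ k * f j else 0) +
      (if j = k then (1 - barUp (2 * n) p₁ k - barDownRate (2 * n) β p₁ k) * f j else 0) := by
    intro j hj
    rw [mem_range] at hj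
    rw [barQ, barDownRate, show 2 * n / 2 = n by omega]
    split_ifs <;> first | omega | ring1 | simp_all
  rw [sum_congr rfl hterm, sum_add_distrib, sum_add_distrib, sum_ite_eq', sum_ite_eq', sum_ite_eq',
    if_pos (show k - 1 ∈ range (n + 1) from mem_range.mpr (by omega)),
    if_pos (show k ∈ range (n + 1) from mem_range.mpr (by omega)), birthDeathGen]
  by_cases h : k + 1 ≤ n
  · rw [if_pos (mem_range.mpr (by omega))]
    ring
  · rw [if_neg (by rw [mem_range]; omega), hup h]
    ring

theorem barUp_two_mul (n : ℕ) (p₁ : ℝ) {k : ℕ} (hk : k ≠ 0) :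
    barUp (2 * n) p₁ k = p₁ / 4 * ((n - k) / n) := by
  rw [barUp, if_neg hk]
  push_cast
  rw [← mul_sub, mul_div_mul_left _ _ two_ne_zero]

theorem div_le_barUp {n : ℕ} {p₁ : ℝ} (hp₁ : 0 ≤ p₁) {j : ℕ} (hj : j < n) :
    p₁ / (4 * n) ≤ barUp (2 * n) p₁ j := by
  have hn : (1 : ℝ) ≤ n := by exact_mod_cast (show 1 ≤ n by omega)
  rcases eq_or_ne j 0 with rfl | hj0
  · rw [barUp, if_pos rfl]
    gcongr
    linarith
  · have hj' : (j : ℝ) + 1 ≤ n := by exact_mod_cast hj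
    rw [barUp_two_mul n p₁ hj0, div_mul_div_comm, ← mul_comm (n : ℝ)]
    gcongr
    exact le_mul_of_one_le_right hp₁ (by linarith)

theorem barUp_nonneg {n : ℕ} {p₁ : ℝ} (hp₁ : 0 ≤ p₁) {k : ℕ} (hk : k ≤ n) :
    0 ≤ barUp (2 * n) p₁ k := by
  rcases eq_or_ne k 0 with rfl | hk0
  · rw [barUp, if_pos rfl]; positivity
  · have hk' : (k : ℝ) ≤ n := by exact_mod_cast hk
    rw [barUp_two_mul n p₁ hk0]
    exact mul_nonneg (by positivity) (div_nonneg (by linarith) (by positivity))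

theorem barDownRate_nonneg (N : ℕ) (β : ℝ) {p₁ : ℝ} (hp₁ : 0 ≤ p₁) (k : ℕ) :
    0 ≤ barDownRate N β p₁ k := by
  unfold barDownRate barDown
  split_ifs <;> positivity

theorem barUp_add_barDownRate_le {n : ℕ} {β p₁ : ℝ} (hβ : 0 ≤ β) (hp₁ : 0 ≤ p₁) {k : ℕ}
    (hk : k ≤ n) :
    barUp (2 * n) p₁ k + barDownRate (2 * n) β p₁ k ≤ p₁ / 2 := by
  rcases eq_or_ne k 0 with rfl | hk0
  · simp [barUp, barDownRate]
  have hk1 : (1 : ℝ) ≤ k := by exact_mod_cast Nat.one_le_iff_ne_zero.mpr hk0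
  have hn : (0 : ℝ) < n := by exact_mod_cast (show 0 < n by omega)
  rw [barUp_two_mul n p₁ hk0, barDownRate, if_neg hk0, barDown]
  push_cast
  have hexp : exp (2 * β * (1 - 2 * k) / (2 * n)) ≤ 1 :=
    exp_le_one_iff.mpr (div_nonpos_of_nonpos_of_nonneg
      (mul_nonpos_of_nonneg_of_nonpos (by positivity) (by linarith)) (by positivity))
  calc _ ≤ p₁ / 4 * ((n - k) / n) + p₁ / 4 * ((2 * n + 2 * k) / (2 * n)) :=
        (add_le_add_iff_left _).mpr (mul_le_of_le_one_right (by positivity) hexp)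
    _ = p₁ / 2 := by field_simp; ring

theorem birthDeathGen_eq_of_sum_barQ_eq {n : ℕ} (hn : 0 < n) {β p₁ ev : ℝ} {f : ℕ → ℝ}
    (hf : ∀ k ≤ n, ∑ j ∈ range (n + 1), barQ (2 * n) β p₁ k j * f j = ev * f k) :
    ∀ k ≤ n, birthDeathGen (barUp (2 * n) p₁) (barDownRate (2 * n) β p₁) f k =
      (ev - 1) * f k :=
  fun k hk => by linarith [sum_barQ_mul hn β p₁ hk f, hf k hk]

theorem barQ_eigenvalue_le {n : ℕ} (hn : 0 < n) {β p₁ ev : ℝ} {f : ℕ → ℝ} (hβ : 0 ≤ β)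
    (hp₁ : 0 < p₁) (hlarge : 1 ≤ β ∨ β * (n + 2) ≤ n)
    (hf : ∀ k ≤ n, ∑ j ∈ range (n + 1), barQ (2 * n) β p₁ k j * f j = ev * f k)
    (hnc : ∃ k ≤ n, ∃ k' ≤ n, f k ≠ f k') :
    ev ≤ 1 - p₁ / 16 * (1 / ((n : ℝ) + 1) ^ 3) := by
  obtain ⟨m, hmono, hanti⟩ := barPiW_unimodal hβ hlarge
  have hgap := div_le_one_sub_of_birthDeathGen_eq (fun k _ => barPiW_pos _ _ k) hmono hanti
    (barUp_self hn p₁) (fun j hj => barPiW_mul_barDownRate_succ β p₁ hj)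
    (by positivity : 0 < p₁ / (4 * n)) (fun j hj => div_le_barUp hp₁.le hj)
    (birthDeathGen_eq_of_sum_barQ_eq hn hf) hnc
  have hpoly : (4 * n * (n * (n + 1)) : ℝ) ≤ 16 * (n + 1) ^ 3 := by
    nlinarith [mul_nonneg (by positivity : (0 : ℝ) ≤ n + 1)
      (by positivity : (0 : ℝ) ≤ 12 * n ^ 2 + 32 * n + 16)]
  have hbound : p₁ / 16 * (1 / ((n : ℝ) + 1) ^ 3) ≤ p₁ / (4 * n) / (n * (n + 1)) := by
    rw [div_div, mul_one_div, div_div]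
    exact div_le_div_of_nonneg_left hp₁.le (by positivity) hpoly
  linarith

theorem one_sub_le_barQ_eigenvalue {n : ℕ} (hn : 0 < n) {β p₁ ev : ℝ} {f : ℕ → ℝ}
    (hβ : 0 ≤ β) (hp₁ : 0 ≤ p₁)
    (hf : ∀ k ≤ n, ∑ j ∈ range (n + 1), barQ (2 * n) β p₁ k j * f j = ev * f k)
    (hnz : ∃ k ≤ n, f k ≠ 0) :
    1 - p₁ ≤ ev := by
  have h := abs_sub_one_le_of_birthDeathGen_eq (fun k hk => barUp_nonneg hp₁ hk)
    (fun k _ => barDownRate_nonneg _ _ hp₁ k) (barUp_self hn p₁)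
    (fun k hk => barUp_add_barDownRate_le hβ hp₁ hk) (birthDeathGen_eq_of_sum_barQ_eq hn hf) hnz
  linarith [(abs_le.mp h).1]

/-- for every `β > 0`, `p₁ ∈ (0,1)` and all sufficiently large even `N`,
the projected birth-and-death chain `\bar P` satisfies
`λ₁(\bar P) ≤ 1 - (p₁/16)(N/2+1)^{-3}` (every eigenvalue with a nonconstant
eigenfunction obeys this bound) and `λ_min(\bar P) ≥ 1 - p₁` (every eigenvalue is at
least `1 - p₁`). -/
theorem ising_projected_eigenvalue_bounds (β p₁ : ℝ) (hβ : 0 < β)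
    (hp₁ : p₁ ∈ Set.Ioo (0 : ℝ) 1) :
    ∃ N₀ : ℕ, ∀ N : ℕ, N₀ ≤ N → Even N →
      (∀ (ev : ℝ) (f : ℕ → ℝ),
        (∀ k ≤ N / 2, ∑ j ∈ Finset.range (N / 2 + 1), barQ N β p₁ k j * f j = ev * f k) →
        (∃ k ≤ N / 2, ∃ k' ≤ N / 2, f k ≠ f k') →
        ev ≤ 1 - (p₁ / 16) * (1 / ((N : ℝ) / 2 + 1) ^ 3)) ∧
      (∀ (ev : ℝ) (f : ℕ → ℝ),
        (∀ k ≤ N / 2, ∑ j ∈ Finset.range (N / 2 + 1), barQ N β p₁ k j * f j = ev * f k) →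
        (∃ k ≤ N / 2, f k ≠ 0) →
        1 - p₁ ≤ ev) := by
  obtain ⟨n₀, hn₀⟩ := exists_nat_gt (2 * β / (1 - β))
  refine ⟨2 * (n₀ + 1), fun N hN hNeven => ?_⟩
  obtain ⟨n, rfl⟩ := hNeven.two_dvd
  have hlarge : 1 ≤ β ∨ β * (n + 2) ≤ n := by
    refine (le_or_gt 1 β).imp_right fun hβ1 => ?_
    have h := hn₀.trans_le (show (n₀ : ℝ) ≤ n by exact_mod_cast (by omega : n₀ ≤ n))
    rw [div_lt_iff₀ (by linarith)] at h
    linarith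
  simp only [show 2 * n / 2 = n by omega, show ((2 * n : ℕ) : ℝ) / 2 = n by push_cast; ring]
  exact ⟨fun ev f hf hnc => barQ_eigenvalue_le (by omega) hβ.le hp₁.1 hlarge hf hnc,
    fun ev f hf hnz => one_sub_le_barQ_eigenvalue (by omega) hβ.le hp₁.1.le hf hnz⟩
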